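/- Weak execution models following a strict event-timing satisfy temporal precedence: Let C be a CP-theory that strictly respects a timing λ, and let κ be an event-timing of λ such that κ(r) > λ(b) for every r ∈ C and every b ∈ body_At⁻(r). Let ⟨T, I, E⟩ be a weak execution model of C such that κ(E(s)) ≤ κ(E(s')) whenever the non-leaf node s' is a descendant of the non-leaf node s. Then for every non-leaf node s and every terminal hypothetical derivation sequence ν₀,…,νₙ at s, body(E(s))^{νₙ} = t; in particular, ⟨T, I, E⟩ is an execution model of C. -/

import Mathlib

noncomputable section
open scoped Classical

namespace CP

/-- The three truth values. -/
inductive TV where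
  | f | u | t
deriving DecidableEq

namespace TV

/-- Rank of a truth value in the truth order `f ≤_t u ≤_t t`. -/
def rank : TV → ℕ
  | f => 0
  | u => 1
  | t => 2

/-- Minimum in the truth order. -/
def tmin (a b : TV) : TV := if rank a ≤ rank b then a else b

/-- Maximum in the truth order. -/
def tmax (a b : TV) : TV := if rank a ≤ rank b then b else a

/-- Kleene negation. -/
def tneg : TV → TV
  | f => t
  | u => u
  | t => f

/-- The precision order on truth values: `u ≤_p f` and `u ≤_p t` (and reflexivity). -/
def lep (a b : TV) : Prop := a = u ∨ a = b

end TV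

/-- Pointwise precision order on three-valued interpretations. -/
def leP {A : Type} (ν ν' : A → TV) : Prop := ∀ a, TV.lep (ν a) (ν' a)

/-- Propositional formulas over a type `A` of atoms. -/
inductive Form (A : Type) where
  | atom : A → Form A
  | conj : Form A → Form A → Form A
  | disj : Form A → Form A → Form A
  | neg  : Form A → Form A

namespace Form

variable {A : Type}

/-- Two-valued satisfaction of a formula in an interpretation (a set of atoms). -/
def sat (I : Set A) : Form A → Prop
  | .atom a => a ∈ I
  | .conj φ ψ => sat I φ ∧ sat I ψ
  | .disj φ ψ => sat I φ ∨ sat I ψ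
  | .neg φ => ¬ sat I φ

/-- Kleene three-valued valuation of a formula. -/
def val (ν : A → TV) : Form A → TV
  | .atom a => ν a
  | .conj φ ψ => TV.tmin (val ν φ) (val ν ψ)
  | .disj φ ψ => TV.tmax (val ν φ) (val ν ψ)
  | .neg φ => TV.tneg (val ν φ)

/-- A formula is positive if it contains no negation. -/
def Positive : Form A → Prop
  | .atom _ => True
  | .conj φ ψ => Positive φ ∧ Positive ψ
  | .disj φ ψ => Positive φ ∧ Positive ψ
  | .neg _ => False

/-- The set of atoms occurring in a formula. -/
def atoms : Form A → Set A
  | .atom a => {a}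
  | .conj φ ψ => atoms φ ∪ atoms ψ
  | .disj φ ψ => atoms φ ∪ atoms ψ
  | .neg φ => atoms φ

/-- Atoms occurring under a number of negations of parity `b` (`true` = odd). -/
def atomsPar : Bool → Form A → Set A
  | b, .atom a => if b then ∅ else {a}
  | b, .conj φ ψ => atomsPar b φ ∪ atomsPar b ψ
  | b, .disj φ ψ => atomsPar b φ ∪ atomsPar b ψ
  | b, .neg φ => atomsPar (!b) φ

/-- Atoms occurring within the scope of an odd number of negations. -/
def natoms (φ : Form A) : Set A := atomsPar true φ

end Form

/-- A CP-law: a nonempty head list of distinct atoms with probabilities in `(0,1]`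
summing to at most `1`, together with a body formula. -/
structure CPLaw (A : Type) where
  head : List (A × ℝ)
  body : Form A
  head_ne : head ≠ []
  head_nodup : (head.map Prod.fst).Nodup
  head_pos : ∀ p ∈ head, 0 < p.2 ∧ p.2 ≤ 1
  head_sum : (head.map Prod.snd).sum ≤ 1

namespace CPLaw

variable {A : Type}

/-- `head_At(r)`: the set of atoms occurring in the head of `r`. -/
def headAt (r : CPLaw A) : Set A := {a | a ∈ r.head.map Prod.fst}

/-- The sum `Σᵢ αᵢ` of the probabilities in the head of `r`. -/
def psum (r : CPLaw A) : ℝ := (r.head.map Prod.snd).sum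

end CPLaw

/-- A probabilistic process: a finite rooted tree (given by a parent function with a
depth function ensuring well-foundedness), with an interpretation, an edge probability
and a path probability attached to each node, together with (for use in execution
models) a CP-law index `rule` attached to each node and, for each non-root node, the
`choice` in the head of the rule fired at its parent that it corresponds to
(`none` is the extra child carrying the leftover probability `1 - Σᵢ αᵢ`). -/
structure Proc (A R : Type) where
  Node : Type
  [fintypeNode : Fintype Node]
  root : Node
  parent : Node → Node
  depth : Node → ℕ
  interp : Node → Set A
  prob : Node → ℝ
  pathProb : Node → ℝ
  rule : Node → R
  choice : Node → Option ℕ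
  depth_root : depth root = 0
  depth_parent : ∀ s, s ≠ root → depth s = depth (parent s) + 1
  pathProb_root : pathProb root = 1
  pathProb_parent : ∀ s, s ≠ root → pathProb s = pathProb (parent s) * prob s

attribute [instance] Proc.fintypeNode

namespace Proc

variable {A R : Type} (W : Proc A R)

/-- `s'` is a child of `s`. -/
def isChild (s' s : W.Node) : Prop := s' ≠ W.root ∧ W.parent s' = s

/-- `s` is a leaf. -/
def isLeaf (s : W.Node) : Prop := ∀ s', ¬ W.isChild s' s

/-- `strictAnc a b`: `a` is a strict ancestor of `b`. -/
def strictAnc (a b : W.Node) : Prop :=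
  Relation.TransGen (fun y x => W.isChild y x) b a

end Proc

variable {A R : Type}

/-- `R_E(s)`: the CP-laws that have not fired at any strict ancestor of `s`. -/
def RE (W : Proc A R) (s : W.Node) : Set R :=
  {r | ∀ s', W.strictAnc s' s → W.rule s' ≠ r}

/-- The CP-law `E(s)` fires at the non-leaf node `s`: `s` has exactly one child for
each head element `(Aᵢ, αᵢ)` (with interpretation `I(s) ∪ {Aᵢ}` and edge probability
`αᵢ`), plus exactly one extra child with unchanged interpretation and edge probability
`1 - Σᵢ αᵢ` in case `Σᵢ αᵢ < 1`. -/
def FiresAt (C : R → CPLaw A) (W : Proc A R) (s : W.Node) : Prop :=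
  (∀ s', W.isChild s' s →
     (∀ i, W.choice s' = some i →
        ∃ h : i < (C (W.rule s)).head.length,
          W.interp s' = insert ((C (W.rule s)).head.get ⟨i, h⟩).1 (W.interp s) ∧
          W.prob s' = ((C (W.rule s)).head.get ⟨i, h⟩).2) ∧
     (W.choice s' = none →
        (C (W.rule s)).psum < 1 ∧ W.interp s' = W.interp s ∧
          W.prob s' = 1 - (C (W.rule s)).psum)) ∧
  (∀ s₁ s₂, W.isChild s₁ s → W.isChild s₂ s → W.choice s₁ = W.choice s₂ → s₁ = s₂) ∧
  (∀ i, i < (C (W.rule s)).head.length → ∃ s', W.isChild s' s ∧ W.choice s' = some i) ∧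
  ((C (W.rule s)).psum < 1 → ∃ s', W.isChild s' s ∧ W.choice s' = none)

/-- `⟨W, I, E⟩` is a weak execution model of the CP-theory `C`. -/
def IsWEM (C : R → CPLaw A) (W : Proc A R) : Prop :=
  W.interp W.root = (∅ : Set A) ∧
  (∀ s, s ≠ W.root → 0 ≤ W.prob s ∧ W.prob s ≤ 1) ∧
  (∀ s, ¬ W.isLeaf s →
    (∑ s' ∈ Finset.univ.filter (fun s' => W.isChild s' s), W.prob s') = 1) ∧
  (∀ s, ¬ W.isLeaf s →
    W.rule s ∈ RE W s ∧ Form.sat (W.interp s) (C (W.rule s)).body ∧ FiresAt C W s) ∧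
  (∀ l, W.isLeaf l → ∀ r ∈ RE W l, ¬ Form.sat (W.interp l) (C r).body)

/-- `ν 0, …, ν n` is a hypothetical derivation sequence at node `s`. -/
def IsHDS (C : R → CPLaw A) (W : Proc A R) (s : W.Node)
    (ν : ℕ → A → TV) (n : ℕ) : Prop :=
  (∀ a, ν 0 a = if a ∈ W.interp s then TV.t else TV.f) ∧
  ∀ i, i < n → ∃ r ∈ RE W s,
    Form.val (ν i) (C r).body ≠ TV.f ∧
    (∀ p ∈ (C r).headAt, ν i p = TV.f → ν (i+1) p = TV.u) ∧
    (∀ p, ¬ (p ∈ (C r).headAt ∧ ν i p = TV.f) → ν (i+1) p = ν i p)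

/-- The hypothetical derivation sequence `ν 0, …, ν n` at `s` is terminal. -/
def HDSTerminal (C : R → CPLaw A) (W : Proc A R) (s : W.Node)
    (ν : ℕ → A → TV) (n : ℕ) : Prop :=
  ¬ ∃ r ∈ RE W s, Form.val (ν n) (C r).body ≠ TV.f ∧
      ∃ p ∈ (C r).headAt, ν n p = TV.f

/-- `⟨W, I, E⟩` is an execution model of `C`: a weak execution model in which, at every
non-leaf node, the body of the fired CP-law is not unknown in the potential of the
node (the common limit of all terminal hypothetical derivation sequences). -/
def IsExec (C : R → CPLaw A) (W : Proc A R) : Prop :=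
  IsWEM C W ∧
  ∀ s, ¬ W.isLeaf s → ∀ ν n, IsHDS C W s ν n → HDSTerminal C W s ν n →
    Form.val (ν n) (C (W.rule s)).body ≠ TV.u

/-- `π_T`: the probability distribution on interpretations induced by a process. -/
def piT (W : Proc A R) (J : Set A) : ℝ :=
  ∑ l ∈ Finset.univ.filter (fun l => W.isLeaf l ∧ W.interp l = J), W.pathProb l

/-- The CP-theory `C` respects the timing `lam`. -/
def Respects (C : R → CPLaw A) (lam : A → ℕ) : Prop :=
  ∀ r, ∀ h ∈ (C r).headAt, ∀ b ∈ (C r).body.atoms, lam b ≤ lam h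

/-- The CP-theory `C` strictly respects the timing `lam`. -/
def StrictlyRespects (C : R → CPLaw A) (lam : A → ℕ) : Prop :=
  Respects C lam ∧ ∀ r, ∀ h ∈ (C r).headAt, ∀ b ∈ (C r).body.natoms, lam b < lam h

/-- `κ` is an event-timing of the timing `lam`. -/
def IsEventTiming (C : R → CPLaw A) (lam : A → ℕ) (κ : R → ℕ) : Prop :=
  ∀ r, (∀ b ∈ (C r).body.atoms, lam b ≤ κ r) ∧ (∀ h ∈ (C r).headAt, κ r ≤ lam h)

/-- A weak execution model follows the timing `lam`: there is an event-timing `κ` of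
`lam` such that the CP-laws fire in the order imposed by `κ`. -/
def Follows (C : R → CPLaw A) (W : Proc A R) (lam : A → ℕ) : Prop :=
  ∃ κ : R → ℕ, IsEventTiming C lam κ ∧
    ∀ s s', ¬ W.isLeaf s → ¬ W.isLeaf s' → W.strictAnc s s' →
      κ (W.rule s) ≤ κ (W.rule s')

/-!
A CP-law `r` with `κ r < κ (E s)` cannot be applicable at a non-leaf node `s`: every atom added
below `s` is a head atom of a law fired at time at least `κ (E s) > κ r`, hence later than every
body atom of `r`, so `r` would still be applicable at any leaf below `s`. Therefore a hypothetical
derivation sequence at `s` only uses laws of time at least `κ (E s)`, and only turns atoms of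
time at least `κ (E s)` from `f` to `u`. The negated body atoms of `E s` are earlier, so they keep
their value, and raising the other atoms in the truth order keeps the body of `E s`, which is
true in `I(s)`, true.
-/

namespace TV

theorem rank_tmin (a b : TV) : (tmin a b).rank = min a.rank b.rank := by
  cases a <;> cases b <;> rfl

theorem rank_tmax (a b : TV) : (tmax a b).rank = max a.rank b.rank := by
  cases a <;> cases b <;> rfl

theorem rank_tneg (a : TV) : (tneg a).rank = 2 - a.rank := by
  cases a <;> rfl

theorem rank_le_two (a : TV) : a.rank ≤ 2 := by
  cases a <;> decide

theorem eq_t_of_two_le_rank {a : TV} (h : 2 ≤ a.rank) : a = t := by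
  cases a <;> simp_all [rank]

end TV

namespace Form

variable {A : Type}

def ofSet (I : Set A) : A → TV := fun a => if a ∈ I then TV.t else TV.f

theorem val_ofSet (I : Set A) (φ : Form A) :
    val (ofSet I) φ = if sat I φ then TV.t else TV.f := by
  induction φ with
  | atom a => rfl
  | conj φ ψ ihφ ihψ =>
      simp only [val, sat, ihφ, ihψ]
      split_ifs <;> simp_all [TV.tmin, TV.rank]
  | disj φ ψ ihφ ihψ =>
      simp only [val, sat, ihφ, ihψ]
      split_ifs <;> simp_all [TV.tmax, TV.rank]
  | neg φ ih =>
      simp only [val, sat, ih]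
      split_ifs <;> simp_all [TV.tneg]

theorem val_ofSet_ne_f_iff (I : Set A) (φ : Form A) : val (ofSet I) φ ≠ TV.f ↔ sat I φ := by
  rw [val_ofSet]
  split_ifs <;> simp_all

theorem val_congr {ν ν' : A → TV} {φ : Form A} (h : ∀ a ∈ φ.atoms, ν a = ν' a) :
    val ν φ = val ν' φ := by
  induction φ with
  | atom a => exact h a rfl
  | conj φ ψ ihφ ihψ | disj φ ψ ihφ ihψ =>
      simp only [val]
      rw [ihφ fun a ha => h a (Or.inl ha), ihψ fun a ha => h a (Or.inr ha)]
  | neg φ ih => simp only [val, ih h]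

theorem sat_congr {I J : Set A} {φ : Form A} (h : ∀ a ∈ φ.atoms, (a ∈ I ↔ a ∈ J)) :
    sat I φ ↔ sat J φ := by
  rw [← val_ofSet_ne_f_iff, ← val_ofSet_ne_f_iff,
    val_congr (ν' := ofSet J) fun a ha => by simp only [ofSet, h a ha]]

theorem rank_val_le_of_atomsPar {ν ν' : A → TV} (hle : ∀ a, (ν a).rank ≤ (ν' a).rank)
    (φ : Form A) (b : Bool) (hfix : ∀ a ∈ atomsPar b φ, ν a = ν' a) :
    if b then (val ν φ).rank ≤ (val ν' φ).rank
    else (val ν' φ).rank ≤ (val ν φ).rank := by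
  induction φ generalizing b with
  | atom a => cases b <;> simp_all [val, atomsPar]
  | conj φ ψ ihφ ihψ =>
      have hφ := ihφ b fun a ha => hfix a (Or.inl ha)
      have hψ := ihψ b fun a ha => hfix a (Or.inr ha)
      cases b
      · simp only [val, TV.rank_tmin, Bool.false_eq_true, if_false] at hφ hψ ⊢
        exact min_le_min hφ hψ
      · simp only [val, TV.rank_tmin, if_true] at hφ hψ ⊢
        exact min_le_min hφ hψ
  | disj φ ψ ihφ ihψ =>
      have hφ := ihφ b fun a ha => hfix a (Or.inl ha)
      have hψ := ihψ b fun a ha => hfix a (Or.inr ha)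
      cases b
      · simp only [val, TV.rank_tmax, Bool.false_eq_true, if_false] at hφ hψ ⊢
        exact max_le_max hφ hψ
      · simp only [val, TV.rank_tmax, if_true] at hφ hψ ⊢
        exact max_le_max hφ hψ
  | neg φ ih =>
      have hφ := ih (!b) hfix
      have := TV.rank_le_two (val ν φ)
      have := TV.rank_le_two (val ν' φ)
      cases b <;> simp only [val, TV.rank_tneg, Bool.not_false, Bool.not_true,
        Bool.false_eq_true, if_true, if_false] at hφ ⊢ <;> omega

theorem rank_val_le_of_natoms {ν ν' : A → TV} (hle : ∀ a, (ν a).rank ≤ (ν' a).rank)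
    {φ : Form A} (hfix : ∀ a ∈ φ.natoms, ν a = ν' a) :
    (val ν φ).rank ≤ (val ν' φ).rank := by
  simpa using rank_val_le_of_atomsPar hle φ true hfix

end Form

namespace Proc

variable {A R : Type} (W : Proc A R)

abbrev Below (y s : W.Node) : Prop := Relation.ReflTransGen (fun y x => W.isChild y x) y s

theorem strictAnc_iff_of_isChild {c y : W.Node} (h : W.isChild c y) (x : W.Node) :
    W.strictAnc x c ↔ x = y ∨ W.strictAnc x y := by
  unfold strictAnc
  rw [Relation.TransGen.head'_iff]
  constructor
  · rintro ⟨b, hcb, hbx⟩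
    rw [← hcb.2, h.2] at hbx
    exact Relation.reflTransGen_iff_eq_or_transGen.mp hbx
  · intro hx
    exact ⟨y, h, Relation.reflTransGen_iff_eq_or_transGen.mpr hx⟩

theorem exists_isLeaf_below (s : W.Node) : ∃ l, W.isLeaf l ∧ W.Below l s := by
  obtain ⟨l, hl, hmax⟩ := (Finset.univ.filter (W.Below · s)).exists_max_image W.depth
    ⟨s, Finset.mem_filter.mpr ⟨Finset.mem_univ s, .refl⟩⟩
  refine ⟨l, fun c hc => ?_, (Finset.mem_filter.mp hl).2⟩
  have hcs : W.Below c s := .head hc (Finset.mem_filter.mp hl).2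
  have hdepth := W.depth_parent c hc.1
  rw [hc.2] at hdepth
  have := hmax c (by simp [hcs])
  omega

end Proc

section RE

variable {A R : Type} {W : Proc A R}

theorem mem_RE_of_isChild {c y : W.Node} (h : W.isChild c y) {r : R} :
    r ∈ RE W c ↔ r ∈ RE W y ∧ W.rule y ≠ r := by
  simp only [RE, Set.mem_ofPred_eq, W.strictAnc_iff_of_isChild h, or_imp, forall_and,
    forall_eq]
  exact and_comm

end RE

section WEM

variable {A R : Type} {C : R → CPLaw A} {W : Proc A R}

theorem IsWEM.interp_subset_of_isChild (hW : IsWEM C W) {c y : W.Node} (h : W.isChild c y) :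
    W.interp y ⊆ W.interp c ∧ W.interp c ⊆ W.interp y ∪ (C (W.rule y)).headAt := by
  obtain ⟨hsome, hnone⟩ := (hW.2.2.2.1 y fun hy => hy c h).2.2.1 c h
  cases hc : W.choice c with
  | none =>
      rw [(hnone hc).2.1]
      exact ⟨subset_rfl, Set.subset_union_left⟩
  | some i =>
      obtain ⟨hi, heq, -⟩ := hsome i hc
      rw [heq]
      refine ⟨Set.subset_insert _ _, Set.insert_subset ?_ Set.subset_union_left⟩
      exact Or.inr (List.mem_map_of_mem (List.get_mem _ _))

variable {lam : A → ℕ} {κ : R → ℕ}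

theorem IsWEM.not_sat_body_of_lt_rule (hW : IsWEM C W) (hκ : IsEventTiming C lam κ)
    (hord : ∀ s s', ¬ W.isLeaf s → ¬ W.isLeaf s' → W.strictAnc s s' →
      κ (W.rule s) ≤ κ (W.rule s'))
    {s : W.Node} (hs : ¬ W.isLeaf s) {r : R} (hr : r ∈ RE W s)
    (hlt : κ r < κ (W.rule s)) : ¬ Form.sat (W.interp s) (C r).body := by
  intro hsat
  have key : ∀ y, W.Below y s →
      r ∈ RE W y ∧ ∀ a ∈ (C r).body.atoms, (a ∈ W.interp y ↔ a ∈ W.interp s) := by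
    intro y hy
    induction hy using Relation.ReflTransGen.head_induction_on with
    | refl => exact ⟨hr, fun _ _ => Iff.rfl⟩
    | head hcy hys ih =>
        rename_i c y
        have hy : ¬ W.isLeaf y := fun hy => hy c hcy
        have hκy : κ (W.rule s) ≤ κ (W.rule y) := by
          rcases Relation.reflTransGen_iff_eq_or_transGen.mp hys with rfl | hsy
          · exact le_rfl
          · exact hord s y hs hy hsy
        obtain ⟨hsub, hsup⟩ := hW.interp_subset_of_isChild hcy
        have hry : W.rule y ≠ r := fun he => by rw [he] at hκy; omega
        refine ⟨(mem_RE_of_isChild hcy).mpr ⟨ih.1, hry⟩, fun a ha => ?_⟩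
        rw [← ih.2 a ha]
        refine ⟨fun hac => (hsup hac).resolve_right fun hhead => ?_, fun hay => hsub hay⟩
        have := (hκ r).1 a ha
        have := (hκ (W.rule y)).2 a hhead
        omega
  obtain ⟨l, hl, hls⟩ := W.exists_isLeaf_below s
  obtain ⟨hrl, hagree⟩ := key l hls
  exact hW.2.2.2.2 l hl r hrl ((Form.sat_congr hagree).mpr hsat)

end WEM

section HDS

variable {A R : Type} {C : R → CPLaw A} {W : Proc A R} {lam : A → ℕ} {κ : R → ℕ}

theorem IsHDS.zero_eq {s : W.Node} {ν : ℕ → A → TV} {n : ℕ} (hν : IsHDS C W s ν n) :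
    ν 0 = Form.ofSet (W.interp s) :=
  funext hν.1

theorem IsHDS.eq_f_and_le_lam_of_ne (hκ : IsEventTiming C lam κ) {s : W.Node}
    {ν : ℕ → A → TV} {n : ℕ} (hν : IsHDS C W s ν n) {k : ℕ}
    (hquiet : ∀ r ∈ RE W s, κ r < k → ¬ Form.sat (W.interp s) (C r).body) :
    ∀ i ≤ n, ∀ p, ν i p ≠ ν 0 p → ν 0 p = TV.f ∧ k ≤ lam p := by
  intro i
  induction i with
  | zero => intro _ p h; exact absurd rfl h
  | succ i ih =>
      intro hi p hp
      obtain ⟨r, hr, hbody, -, hkeep⟩ := hν.2 i (by omega)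
      have hkr : k ≤ κ r := by
        by_contra! hlt
        have hfix : ∀ a ∈ (C r).body.atoms, ν i a = Form.ofSet (W.interp s) a := by
          intro a ha
          rw [← hν.zero_eq]
          by_contra hne
          have := (ih (by omega) a hne).2
          have := (hκ r).1 a ha
          omega
        rw [Form.val_congr hfix, Form.val_ofSet_ne_f_iff] at hbody
        exact hquiet r hr hlt hbody
      by_cases hpr : p ∈ (C r).headAt ∧ ν i p = TV.f
      · refine ⟨?_, hkr.trans ((hκ r).2 p hpr.1)⟩
        by_cases hip : ν i p = ν 0 p
        · exact hip ▸ hpr.2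
        · exact (ih (by omega) p hip).1
      · rw [hkeep p hpr] at hp
        exact ih (by omega) p hp

theorem IsHDS.val_rule_body_eq_t (hW : IsWEM C W) (hκ : IsEventTiming C lam κ)
    (hκneg : ∀ r, ∀ b ∈ (C r).body.natoms, lam b < κ r)
    (hord : ∀ s s', ¬ W.isLeaf s → ¬ W.isLeaf s' → W.strictAnc s s' →
      κ (W.rule s) ≤ κ (W.rule s'))
    {s : W.Node} (hs : ¬ W.isLeaf s) {ν : ℕ → A → TV} {n : ℕ} (hν : IsHDS C W s ν n) :
    Form.val (ν n) (C (W.rule s)).body = TV.t := by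
  have hchanged := hν.eq_f_and_le_lam_of_ne hκ fun r hr hlt =>
    hW.not_sat_body_of_lt_rule hκ hord hs hr hlt
  have hle : ∀ a, (ν 0 a).rank ≤ (ν n a).rank := fun a => by
    by_cases h : ν n a = ν 0 a
    · rw [h]
    · simp [(hchanged n le_rfl a h).1, TV.rank]
  have hneg : ∀ b ∈ (C (W.rule s)).body.natoms, ν 0 b = ν n b := fun b hb => by
    by_contra h
    have := (hchanged n le_rfl b (Ne.symm h)).2
    have := hκneg _ b hb
    omega
  have h0 : Form.val (ν 0) (C (W.rule s)).body = TV.t := by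
    rw [hν.zero_eq, Form.val_ofSet, if_pos (hW.2.2.2.1 s hs).2.1]
  apply TV.eq_t_of_two_le_rank
  simpa [h0, TV.rank] using Form.rank_val_le_of_natoms hle hneg

end HDS

theorem strict_event_timing_temporal_precedence_general
    {A R : Type}
    (C : R → CPLaw A) (lam : A → ℕ)
    (κ : R → ℕ) (hκ : IsEventTiming C lam κ)
    (hκneg : ∀ r, ∀ b ∈ (C r).body.natoms, lam b < κ r)
    (W : Proc A R) (hW : IsWEM C W)
    (hord : ∀ s s', ¬ W.isLeaf s → ¬ W.isLeaf s' → W.strictAnc s s' →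
      κ (W.rule s) ≤ κ (W.rule s')) :
    (∀ s, ¬ W.isLeaf s → ∀ (ν : ℕ → A → TV) (n : ℕ),
      IsHDS C W s ν n → HDSTerminal C W s ν n →
      Form.val (ν n) (C (W.rule s)).body = TV.t) ∧
    IsExec C W := by
  have body_t {s} (hs : ¬ W.isLeaf s) {ν n} (hν : IsHDS C W s ν n) :=
    hν.val_rule_body_eq_t hW hκ hκneg hord hs
  refine ⟨fun s hs ν n hν _ => body_t hs hν, hW, fun s hs ν n hν _ => ?_⟩
  rw [body_t hs hν]
  decide

/-- Weak execution models following a strict event-timing satisfy temporal precedence: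
if `C` strictly respects `lam`, `κ` is an event-timing of `lam` that is strictly above
the times of all negated body atoms, and the weak execution model `W` fires its events
in the order imposed by `κ`, then at every non-leaf node the body of the fired CP-law
is true in the potential; in particular `W` is an execution model of `C`. -/
theorem strict_event_timing_temporal_precedence
    {A R : Type} [Fintype A] [Fintype R]
    (C : R → CPLaw A) (lam : A → ℕ) (hstr : StrictlyRespects C lam)
    (κ : R → ℕ) (hκ : IsEventTiming C lam κ)
    (hκneg : ∀ r, ∀ b ∈ (C r).body.natoms, lam b < κ r)
    (W : Proc A R) (hW : IsWEM C W)
    (hord : ∀ s s', ¬ W.isLeaf s → ¬ W.isLeaf s' → W.strictAnc s s' →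
      κ (W.rule s) ≤ κ (W.rule s')) :
    (∀ s, ¬ W.isLeaf s → ∀ (ν : ℕ → A → TV) (n : ℕ),
      IsHDS C W s ν n → HDSTerminal C W s ν n →
      Form.val (ν n) (C (W.rule s)).body = TV.t) ∧
    IsExec C W :=
  strict_event_timing_temporal_precedence_general C lam κ hκ hκneg W hW hord

end CP
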